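/- arXiv:2111.05638 — 5 statements merged into one kernel-verified Lean document; each statement's English description precedes it below -/
import Mathlib

section
/- For 0 ≤ r ≤ k, the partial trace over the last k−r tensor factors of the symmetrizing projector P_{s,k} on (C^N)^{⊗k} equals (N[k]/N[r]) · P_{s,r}, where N[m] = binom(N+m-1, m). -/
open scoped BigOperators

/-- The symmetrizing projector `P_{s,k}` on `(ℂ^N)^{⊗ k}`, with the tensor power
realized as functions `(Fin k → Fin N) → ℂ`. -/
noncomputable def Psym (N k : ℕ) : Matrix (Fin k → Fin N) (Fin k → Fin N) ℂ :=
  fun f g => (k.factorial : ℂ)⁻¹ * ∑ σ : Equiv.Perm (Fin k), if f = g ∘ ⇑σ then 1 else 0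

/-- Partial trace over the last `s` tensor factors of an operator on `(ℂ^N)^{⊗ (r+s)}`. -/
noncomputable def ptraceLast (N r s : ℕ)
    (M : Matrix (Fin (r + s) → Fin N) (Fin (r + s) → Fin N) ℂ) :
    Matrix (Fin r → Fin N) (Fin r → Fin N) ℂ :=
  fun f g => ∑ h : Fin s → Fin N, M (Fin.append f h) (Fin.append g h)

/-!
Entrywise, `k! • P_{s,k}` counts the permutations `σ` with `f = g ∘ σ`. Tracing out one more
factor multiplies this count by `N + k`: for the tuples `snoc f x`, `snoc g x` a permutation of
`k + 1` letters either fixes the last letter, or sends it to a `j` with `g j = x`, and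
`∑ x, (#{j | g j = x} + 1) = k + N`. Tracing out `s` factors of `(ℂ^N)^{⊗ (r+s)}` therefore
multiplies the count by the rising factorial `(N + r)^(s)`, and the constant comes out of
`m! * choose (N + m - 1) m = N^(m)` and `N^(r) * (N + r)^(s) = N^(r + s)`.
-/

open Finset Equiv

theorem Fin.snoc_eq_iff {n : ℕ} {α : Fin (n + 1) → Sort*} {p : ∀ i : Fin n, α i.castSucc}
    {x : α (Fin.last n)} {F : ∀ i, α i} :
    Fin.snoc p x = F ↔ p = Fin.init F ∧ x = F (Fin.last n) := by
  rw [← Fin.snoc_init_self F, Fin.snoc_inj, Fin.snoc_init_self]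

/-- The first component is `σ (Fin.last k)`, with `none` standing for `Fin.last k`. -/
def Equiv.Perm.decomposeFinLast (k : ℕ) : Perm (Fin (k + 1)) ≃ Option (Fin k) × Perm (Fin k) :=
  (permCongr finSuccEquivLast).trans Perm.decomposeOption

namespace Equiv.Perm

variable {k : ℕ}

theorem decomposeFinLast_symm_apply_last (o : Option (Fin k)) (τ : Perm (Fin k)) :
    (decomposeFinLast k).symm (o, τ) (Fin.last k) = finSuccEquivLast.symm o := by
  simp [decomposeFinLast, permCongr_apply]

theorem decomposeFinLast_symm_apply_castSucc (o : Option (Fin k)) (τ : Perm (Fin k))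
    (i : Fin k) :
    (decomposeFinLast k).symm (o, τ) i.castSucc = finSuccEquivLast.symm (swap none o (τ i)) := by
  simp [decomposeFinLast, permCongr_apply]

end Equiv.Perm

section permCount

variable {α : Type*} {k : ℕ}

theorem snoc_eq_snoc_comp_decomposeFinLast_symm_none {f g : Fin k → α} {x : α}
    {τ : Perm (Fin k)} :
    Fin.snoc f x = Fin.snoc g x ∘ (Perm.decomposeFinLast k).symm (none, τ) ↔ f = g ∘ τ := by
  rw [Fin.snoc_eq_iff]
  simp [Perm.decomposeFinLast_symm_apply_last, Perm.decomposeFinLast_symm_apply_castSucc,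
    Fin.init, funext_iff]

theorem snoc_eq_snoc_comp_decomposeFinLast_symm_some {f g : Fin k → α} {x : α} {j : Fin k}
    {τ : Perm (Fin k)} :
    Fin.snoc f x = Fin.snoc g x ∘ (Perm.decomposeFinLast k).symm (some j, τ) ↔
      x = g j ∧ f = g ∘ τ := by
  rw [Fin.snoc_eq_iff]
  simp only [Perm.decomposeFinLast_symm_apply_last, Perm.decomposeFinLast_symm_apply_castSucc,
    swap_apply_def, finSuccEquivLast_symm_some, Fin.snoc_castSucc, Fin.init, funext_iff,
    Function.comp_apply, reduceCtorEq, if_false, Option.some_inj]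
  rw [and_comm]
  refine and_congr_right fun hx => forall_congr' fun i => ?_
  split_ifs with h <;> simp [h, hx]

variable [DecidableEq α]

def permCount (f g : Fin k → α) : ℕ := #{σ : Perm (Fin k) | f = g ∘ σ}

theorem permCount_snoc_snoc (f g : Fin k → α) (x : α) :
    permCount (Fin.snoc f x) (Fin.snoc g x) = (#{j | g j = x} + 1) * permCount f g := by
  rw [permCount, card_filter, ← (Perm.decomposeFinLast k).symm.sum_comp, Fintype.sum_prod_type,
    Fintype.sum_option]
  simp only [snoc_eq_snoc_comp_decomposeFinLast_symm_none,
    snoc_eq_snoc_comp_decomposeFinLast_symm_some, ite_and, Finset.sum_ite_irrel,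
    sum_const_zero, ← card_filter]
  rw [permCount, ← Finset.sum_filter, sum_const, smul_eq_mul]
  simp only [eq_comm (a := x)]
  ring

theorem sum_permCount_snoc_snoc [Fintype α] (f g : Fin k → α) :
    ∑ x, permCount (Fin.snoc f x) (Fin.snoc g x) = (Fintype.card α + k) * permCount f g := by
  simp only [permCount_snoc_snoc, ← sum_mul, sum_add_distrib,
    ← card_eq_sum_card_fiberwise (fun _ _ => mem_univ _), card_univ, Fintype.card_fin,
    sum_const, smul_eq_mul, mul_one]
  ring

theorem sum_permCount_append [Fintype α] {r : ℕ} (f g : Fin r → α) (s : ℕ) :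
    ∑ h : Fin s → α, permCount (Fin.append f h) (Fin.append g h) =
      (Fintype.card α + r).ascFactorial s * permCount f g := by
  induction s with
  | zero => simp [Fin.append_right_nil]
  | succ s ih =>
    rw [← (Fin.snocEquiv fun _ => α).sum_comp, Fintype.sum_prod_type_right]
    simp only [Fin.snocEquiv, Equiv.coe_fn_mk, Fin.append_snoc]
    rw [sum_congr rfl fun h _ => sum_permCount_snoc_snoc (Fin.append f h) (Fin.append g h),
      ← mul_sum, ih, Nat.ascFactorial_succ]
    ring

end permCount

theorem Psym_apply (N k : ℕ) (f g : Fin k → Fin N) :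
    Psym N k f g = (k.factorial : ℂ)⁻¹ * permCount f g := by
  rw [Psym, permCount, natCast_card_filter]

theorem ptraceLast_Psym_apply (N r s : ℕ) (f g : Fin r → Fin N) :
    ptraceLast N r s (Psym N (r + s)) f g =
      ((r + s).factorial : ℂ)⁻¹ * (N + r).ascFactorial s * permCount f g := by
  simp only [ptraceLast, Psym_apply, ← mul_sum, ← Nat.cast_sum, sum_permCount_append,
    Fintype.card_fin, Nat.cast_mul, mul_assoc]

theorem factorial_mul_choose_mul_ascFactorial (N r s : ℕ) :
    r.factorial * (N + r - 1).choose r * (N + r).ascFactorial s =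
      (r + s).factorial * (N + (r + s) - 1).choose (r + s) := by
  rw [← Nat.ascFactorial_eq_factorial_mul_choose', ← Nat.ascFactorial_eq_factorial_mul_choose',
    Nat.ascFactorial_mul_ascFactorial]

/-- For `0 ≤ r ≤ k` (here `k = r + s`), the partial trace over the last `k - r` factors
of `P_{s,k}` equals `(N[k]/N[r]) • P_{s,r}`, where `N[m] = binom(N+m-1, m)`. -/
theorem ptrace_Psym (N r s : ℕ) :
    ptraceLast N r s (Psym N (r + s)) =
      (((N + (r + s) - 1).choose (r + s) : ℂ) / ((N + r - 1).choose r : ℂ)) • Psym N r := by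
  -- for `N = 0 < r` the ratio divides by `0`, but then there are no indices at all
  rcases isEmpty_or_nonempty (Fin r → Fin N) with _ | ⟨⟨f₀⟩⟩
  · ext f
    exact isEmptyElim f
  have hchoose : ((N + r - 1).choose r : ℂ) ≠ 0 := by
    have hr : r ≤ N + r - 1 := by
      rcases Nat.eq_zero_or_pos r with rfl | hr
      · exact Nat.zero_le _
      · have := (f₀ ⟨0, hr⟩).pos
        omega
    exact_mod_cast (Nat.choose_pos hr).ne'
  have hconst : (r.factorial * (N + r - 1).choose r * (N + r).ascFactorial s : ℂ) =
      (r + s).factorial * (N + (r + s) - 1).choose (r + s) := by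
    exact_mod_cast factorial_mul_choose_mul_ascFactorial N r s
  ext f g
  rw [ptraceLast_Psym_apply, Matrix.smul_apply, Psym_apply, smul_eq_mul]
  have hr_fact : (r.factorial : ℂ) ≠ 0 := by exact_mod_cast r.factorial_ne_zero
  have hrs_fact : ((r + s).factorial : ℂ) ≠ 0 := by exact_mod_cast (r + s).factorial_ne_zero
  field_simp
  linear_combination (permCount f g : ℂ) * hconst
end

section
/- If a bipartite density matrix ρ on C^N ⊗ C^N is separable, i.e., ρ = Σ_i p_i α_i ⊗ β_i with α_i, β_i positive semidefinite of trace 1 and p_i ≥ 0 summing to 1, then its partial transposition ρ^Γ = Σ_i p_i α_i ⊗ β_i^⊤ is positive semidefinite. -/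
open scoped BigOperators ComplexOrder

/-- Partial transposition on the second tensor factor: `⟨ij|ρ^Γ|kl⟩ = ⟨il|ρ|kj⟩`. -/
def ptranspose {N : ℕ} (ρ : Matrix (Fin N × Fin N) (Fin N × Fin N) ℂ) :
    Matrix (Fin N × Fin N) (Fin N × Fin N) ℂ :=
  fun p q => ρ (p.1, q.2) (q.1, p.2)

open Matrix
open scoped Kronecker

section ptranspose

variable {N : ℕ}

theorem ptranspose_sum {ι : Type*} (s : Finset ι)
    (ρ : ι → Matrix (Fin N × Fin N) (Fin N × Fin N) ℂ) :
    ptranspose (∑ i ∈ s, ρ i) = ∑ i ∈ s, ptranspose (ρ i) := by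
  ext a b
  simp only [ptranspose, Matrix.sum_apply]

theorem ptranspose_smul (c : ℂ) (ρ : Matrix (Fin N × Fin N) (Fin N × Fin N) ℂ) :
    ptranspose (c • ρ) = c • ptranspose ρ :=
  rfl

theorem ptranspose_kronecker (A B : Matrix (Fin N) (Fin N) ℂ) :
    ptranspose (A ⊗ₖ B) = A ⊗ₖ Bᵀ :=
  rfl

end ptranspose

theorem ptranspose_posSemidef_of_separable_general (N k : ℕ)
    (p : Fin k → ℝ) (α β : Fin k → Matrix (Fin N) (Fin N) ℂ)
    (hp : ∀ i, 0 ≤ p i)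
    (hα : ∀ i, (α i).PosSemidef)
    (hβ : ∀ i, (β i).PosSemidef)
    (ρ : Matrix (Fin N × Fin N) (Fin N × Fin N) ℂ)
    (hρ : ρ = ∑ i, ((p i : ℝ) : ℂ) • Matrix.kroneckerMap (· * ·) (α i) (β i)) :
    (ptranspose ρ).PosSemidef := by
  have hpt : ptranspose ρ = ∑ i, ((p i : ℝ) : ℂ) • (α i ⊗ₖ (β i)ᵀ) := by
    simp only [hρ, ptranspose_sum, ptranspose_smul, ptranspose_kronecker]
  rw [hpt]
  exact posSemidef_sum _ fun i _ =>
    ((hα i).kronecker (hβ i).transpose).smul (Complex.zero_le_real.mpr (hp i))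

/-- If a bipartite density matrix `ρ = Σ_i p_i α_i ⊗ β_i` is separable, then its partial
transposition is positive semidefinite. -/
theorem ptranspose_posSemidef_of_separable (N k : ℕ)
    (p : Fin k → ℝ) (α β : Fin k → Matrix (Fin N) (Fin N) ℂ)
    (hp : ∀ i, 0 ≤ p i) (hpsum : ∑ i, p i = 1)
    (hα : ∀ i, (α i).PosSemidef) (hαtr : ∀ i, (α i).trace = 1)
    (hβ : ∀ i, (β i).PosSemidef) (hβtr : ∀ i, (β i).trace = 1)
    (ρ : Matrix (Fin N × Fin N) (Fin N × Fin N) ℂ)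
    (hρ : ρ = ∑ i, ((p i : ℝ) : ℂ) • Matrix.kroneckerMap (· * ·) (α i) (β i)) :
    (ptranspose ρ).PosSemidef :=
  ptranspose_posSemidef_of_separable_general N k p α β hp hα hβ ρ hρ
end

section
/- Cauchy interlacing for compressions: let A be a Hermitian operator on an n-dimensional Hilbert space and B = P A P restricted to a subspace N of codimension k, where P is the orthogonal projection onto N. Then for j = 1,…,n−k, the decreasingly ordered eigenvalues satisfy λ_j(A) ≥ λ_j(B) ≥ λ_{j+k}(A). -/
/-!
Courant–Fischer by dimension count. The isometry `V` carries the span of the top `j + 1`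
eigenvectors of `B = Vᴴ A V` to a `(j + 1)`-dimensional subspace on which the Rayleigh quotient of
`A` is at least `ν j`, while on the span of the eigenvectors of `A` from index `j` on (dimension
`n - j`) it is at most `μ j`. These subspaces meet in a nonzero vector, so `ν j ≤ μ j`; pairing the
bottom `m - j` eigenvectors of `B` with the top `j + k + 1` of `A` gives `μ (j + k) ≤ ν j`.
-/

open scoped BigOperators Matrix

open Module Submodule Finset RCLike
open scoped InnerProductSpace

theorem Submodule.exists_mem_inf_ne_zero_of_finrank_lt_add {K V : Type*} [DivisionRing K]
    [AddCommGroup V] [Module K V] [FiniteDimensional K V] {W₁ W₂ : Submodule K V}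
    (h : finrank K V < finrank K W₁ + finrank K W₂) : ∃ x ∈ W₁ ⊓ W₂, x ≠ 0 := by
  rw [← Submodule.ne_bot_iff]
  intro hbot
  have hsum := finrank_sup_add_finrank_inf_eq W₁ W₂
  rw [hbot, finrank_bot] at hsum
  have := finrank_le (W₁ ⊔ W₂)
  omega

section

variable {𝕜 E ι : Type*} [RCLike 𝕜] [NormedAddCommGroup E] [InnerProductSpace 𝕜 E]

theorem le_of_finrank_lt_add [FiniteDimensional 𝕜 E] {q : E → ℝ} {W₁ W₂ : Submodule 𝕜 E}
    (h : finrank 𝕜 E < finrank 𝕜 W₁ + finrank 𝕜 W₂) {a b : ℝ}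
    (h₁ : ∀ x ∈ W₁, a * ‖x‖ ^ 2 ≤ q x) (h₂ : ∀ x ∈ W₂, q x ≤ b * ‖x‖ ^ 2) : a ≤ b := by
  obtain ⟨x, ⟨hx₁, hx₂⟩, hx⟩ := Submodule.exists_mem_inf_ne_zero_of_finrank_lt_add h
  exact le_of_mul_le_mul_right ((h₁ x hx₁).trans (h₂ x hx₂)) (by positivity)

theorem Orthonormal.finrank_span_image {u : ι → E} (hu : Orthonormal 𝕜 u) (s : Finset ι) :
    finrank 𝕜 (span 𝕜 (u '' s)) = #s := by
  rw [Set.image_eq_range, finrank_span_eq_card (b := fun i : (s : Set ι) => u i)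
    (hu.comp _ Subtype.val_injective).linearIndependent]
  simp

theorem Orthonormal.re_inner_sum_smul_apply {u : ι → E} (hu : Orthonormal 𝕜 u) {T : E →ₗ[𝕜] E}
    {μ : ι → ℝ} (hTu : ∀ i, T (u i) = (μ i : 𝕜) • u i) (s : Finset ι) (a : ι → 𝕜) :
    re ⟪∑ i ∈ s, a i • u i, T (∑ i ∈ s, a i • u i)⟫_𝕜 = ∑ i ∈ s, μ i * ‖a i‖ ^ 2 := by
  simp only [map_sum, map_smul, hTu, smul_smul]
  rw [hu.inner_sum, map_sum]
  refine Finset.sum_congr rfl fun i _ => ?_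
  rw [← mul_assoc, RCLike.conj_mul, ← ofReal_pow, ← ofReal_mul, ofReal_re, mul_comm]

theorem Orthonormal.norm_sum_smul_sq {u : ι → E} (hu : Orthonormal 𝕜 u) (s : Finset ι) (a : ι → 𝕜) :
    ‖∑ i ∈ s, a i • u i‖ ^ 2 = ∑ i ∈ s, ‖a i‖ ^ 2 := by
  simpa using hu.re_inner_sum_smul_apply (T := LinearMap.id) (μ := 1) (by simp) s a

theorem Orthonormal.re_inner_apply_le_of_mem_span {u : ι → E} (hu : Orthonormal 𝕜 u)
    {T : E →ₗ[𝕜] E} {μ : ι → ℝ} (hTu : ∀ i, T (u i) = (μ i : 𝕜) • u i) {s : Finset ι} {c : ℝ}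
    (hc : ∀ i ∈ s, μ i ≤ c) {x : E} (hx : x ∈ span 𝕜 (u '' s)) :
    re ⟪x, T x⟫_𝕜 ≤ c * ‖x‖ ^ 2 := by
  obtain ⟨a, rfl⟩ := (mem_span_image_finset_iff_exists_fun' 𝕜).mp hx
  rw [hu.re_inner_sum_smul_apply hTu, hu.norm_sum_smul_sq, mul_sum]
  exact sum_le_sum fun i hi => mul_le_mul_of_nonneg_right (hc i hi) (by positivity)

theorem Orthonormal.le_re_inner_apply_of_mem_span {u : ι → E} (hu : Orthonormal 𝕜 u)
    {T : E →ₗ[𝕜] E} {μ : ι → ℝ} (hTu : ∀ i, T (u i) = (μ i : 𝕜) • u i) {s : Finset ι} {c : ℝ}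
    (hc : ∀ i ∈ s, c ≤ μ i) {x : E} (hx : x ∈ span 𝕜 (u '' s)) :
    c * ‖x‖ ^ 2 ≤ re ⟪x, T x⟫_𝕜 := by
  obtain ⟨a, rfl⟩ := (mem_span_image_finset_iff_exists_fun' 𝕜).mp hx
  rw [hu.re_inner_sum_smul_apply hTu, hu.norm_sum_smul_sq, mul_sum]
  exact sum_le_sum fun i hi => mul_le_mul_of_nonneg_right (hc i hi) (by positivity)

end

section Compression

variable {𝕜 E F : Type*} [RCLike 𝕜] [NormedAddCommGroup E] [InnerProductSpace 𝕜 E]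
  [NormedAddCommGroup F] [InnerProductSpace 𝕜 F] {n m : ℕ}

theorem compression_eigenvalue_le {T : E →ₗ[𝕜] E} {S : F →ₗ[𝕜] F} (V : F →ₗᵢ[𝕜] E)
    (hS : ∀ y, ⟪V y, T (V y)⟫_𝕜 = ⟪y, S y⟫_𝕜)
    (u : OrthonormalBasis (Fin n) 𝕜 E) {μ : Fin n → ℝ} (hTu : ∀ i, T (u i) = (μ i : 𝕜) • u i)
    (hμ : Antitone μ) {w : Fin m → F} (hw : Orthonormal 𝕜 w) {ν : Fin m → ℝ}
    (hSw : ∀ j, S (w j) = (ν j : 𝕜) • w j) (hν : Antitone ν) {i : Fin n} {j : Fin m}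
    (hij : (i : ℕ) ≤ j) : ν j ≤ μ i := by
  have := u.toBasis.finiteDimensional_of_finite
  refine le_of_finrank_lt_add (q := fun x => re ⟪x, T x⟫_𝕜)
    (W₁ := (span 𝕜 (w '' Iic j)).map V.toLinearMap) (W₂ := span 𝕜 (u '' Ici i)) ?_ ?_ ?_
  · rw [← (equivMapOfInjective _ V.injective _).finrank_eq, hw.finrank_span_image,
      u.orthonormal.finrank_span_image, Fin.card_Iic, Fin.card_Ici, finrank_eq_card_basis u.toBasis,
      Fintype.card_fin]
    omega
  · rintro _ ⟨y, hy, rfl⟩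
    simp only [LinearIsometry.coe_toLinearMap, hS, V.norm_map]
    exact hw.le_re_inner_apply_of_mem_span hSw (fun l hl => hν (mem_Iic.mp hl)) hy
  · exact fun x hx => u.orthonormal.re_inner_apply_le_of_mem_span hTu
      (fun l hl => hμ (mem_Ici.mp hl)) hx

theorem le_compression_eigenvalue {T : E →ₗ[𝕜] E} {S : F →ₗ[𝕜] F} (V : F →ₗᵢ[𝕜] E)
    (hS : ∀ y, ⟪V y, T (V y)⟫_𝕜 = ⟪y, S y⟫_𝕜)
    (u : OrthonormalBasis (Fin n) 𝕜 E) {μ : Fin n → ℝ} (hTu : ∀ i, T (u i) = (μ i : 𝕜) • u i)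
    (hμ : Antitone μ) {w : Fin m → F} (hw : Orthonormal 𝕜 w) {ν : Fin m → ℝ}
    (hSw : ∀ j, S (w j) = (ν j : 𝕜) • w j) (hν : Antitone ν) {i : Fin n} {j : Fin m}
    (hij : n + j ≤ i + m) : μ i ≤ ν j := by
  have := u.toBasis.finiteDimensional_of_finite
  refine le_of_finrank_lt_add (q := fun x => re ⟪x, T x⟫_𝕜)
    (W₁ := span 𝕜 (u '' Iic i)) (W₂ := (span 𝕜 (w '' Ici j)).map V.toLinearMap) ?_ ?_ ?_
  · rw [← (equivMapOfInjective _ V.injective _).finrank_eq, hw.finrank_span_image,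
      u.orthonormal.finrank_span_image, Fin.card_Iic, Fin.card_Ici, finrank_eq_card_basis u.toBasis,
      Fintype.card_fin]
    omega
  · exact fun x hx => u.orthonormal.le_re_inner_apply_of_mem_span hTu
      (fun l hl => hμ (mem_Iic.mp hl)) hx
  · rintro _ ⟨y, hy, rfl⟩
    simp only [LinearIsometry.coe_toLinearMap, hS, V.norm_map]
    exact hw.re_inner_apply_le_of_mem_span hSw (fun l hl => hν (mem_Ici.mp hl)) hy

end Compression

namespace Matrix

variable {𝕜 p q : Type*} [RCLike 𝕜] [Fintype p] [DecidableEq p] [Fintype q] [DecidableEq q]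

theorem inner_toEuclideanLin_conjTranspose_mul_mul (V : Matrix p q 𝕜) (M : Matrix p p 𝕜)
    (x y : EuclideanSpace 𝕜 q) :
    ⟪x, toEuclideanLin (Vᴴ * M * V) y⟫_𝕜 =
      ⟪toEuclideanLin V x, toEuclideanLin M (toEuclideanLin V y)⟫_𝕜 := by
  rw [toLpLin_mul_same, toLpLin_mul_same, LinearMap.comp_apply, LinearMap.comp_apply,
    toEuclideanLin_conjTranspose_eq_adjoint, LinearMap.adjoint_inner_right]

theorem IsHermitian.toEuclideanLin_eigenvectorBasis {A : Matrix p p 𝕜} (hA : A.IsHermitian)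
    (i : p) :
    toEuclideanLin A (hA.eigenvectorBasis i) = (hA.eigenvalues i : 𝕜) • hA.eigenvectorBasis i := by
  rw [toLpLin_apply, hA.mulVec_eigenvectorBasis, RCLike.real_smul_eq_coe_smul (K := 𝕜)]
  rfl

end Matrix

open Matrix in
/-- Cauchy's interlacing theorem: let `A` be a Hermitian operator on an `n = m + k`
dimensional Hilbert space and `B = Vᴴ A V` its compression to a codimension-`k` subspace
(`V` an isometry onto that subspace). If `μ` and `ν` enumerate the eigenvalues of `A`
and `B` in non-increasing order, then `μ_j ≥ ν_j ≥ μ_{j+k}` for `j = 1, …, m`. -/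
theorem cauchy_interlacing (m k : ℕ)
    (A : Matrix (Fin (m + k)) (Fin (m + k)) ℂ) (hA : A.IsHermitian)
    (V : Matrix (Fin (m + k)) (Fin m) ℂ) (hV : Vᴴ * V = 1)
    (hB : (Vᴴ * A * V).IsHermitian)
    (μ : Fin (m + k) → ℝ) (ν : Fin m → ℝ)
    (hμanti : Antitone μ) (hνanti : Antitone ν)
    (hμ : ∃ e : Equiv.Perm (Fin (m + k)), μ = hA.eigenvalues ∘ e)
    (hν : ∃ e : Equiv.Perm (Fin m), ν = hB.eigenvalues ∘ e) :
    ∀ j : Fin m, ν j ≤ μ (Fin.castAdd k j) ∧ μ (j.addNat k) ≤ ν j := by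
  obtain ⟨e, rfl⟩ := hμ
  obtain ⟨f, rfl⟩ := hν
  have hVV (x y) : ⟪toEuclideanLin V x, toEuclideanLin V y⟫_ℂ = ⟪x, y⟫_ℂ := by
    simpa [hV] using (V.inner_toEuclideanLin_conjTranspose_mul_mul 1 x y).symm
  let VL := (toEuclideanLin V).isometryOfInner hVV
  have hS (y) : ⟪VL y, toEuclideanLin A (VL y)⟫_ℂ = ⟪y, toEuclideanLin (Vᴴ * A * V) y⟫_ℂ :=
    (V.inner_toEuclideanLin_conjTranspose_mul_mul A y y).symm
  let u := hA.eigenvectorBasis.reindex e.symm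
  let w := hB.eigenvectorBasis.reindex f.symm
  have hTu (i) : toEuclideanLin A (u i) = ((hA.eigenvalues ∘ e) i : ℂ) • u i := by
    simpa [u] using hA.toEuclideanLin_eigenvectorBasis (e i)
  have hSw (j) : toEuclideanLin (Vᴴ * A * V) (w j) = ((hB.eigenvalues ∘ f) j : ℂ) • w j := by
    simpa [w] using hB.toEuclideanLin_eigenvectorBasis (f j)
  intro j
  exact ⟨compression_eigenvalue_le VL hS u hTu hμanti w.orthonormal hSw hνanti le_rfl,
    le_compression_eigenvalue VL hS u hTu hμanti w.orthonormal hSw hνanti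
      (by rw [Fin.val_addNat]; omega)⟩
end

section
/- Cut-vertex reduction for the circuit-counting polynomial: if G is a connected 2-in/2-out digraph and v is a cut vertex, then J(G;x) = (x+1)·J(G\v; x), where G\v is the connected digraph obtained by deleting v and reconnecting its incident edges in the orientation-preserving way that keeps the graph connected. -/
open scoped BigOperators
open Polynomial

/-- Number of cycles (orbits, including fixed points) of a permutation. -/
def numCycles {E : Type*} [Fintype E] [DecidableEq E] (π : Equiv.Perm E) : ℕ :=
  π.cycleType.card + (Finset.univ.filter fun e => π e = e).card

/-- The circuit-counting polynomial `J(G;x) = Σ_k j_k x^k` of a directed multigraph given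
by source and target maps `s t : E → V`: cycle covers of `G` into edge-disjoint directed
closed circuits correspond to permutations `π` of the edges such that `π e` starts where
`e` ends, and the number of circuits of a cover is the number of cycles of `π`. -/
noncomputable def circuitPoly {V E : Type*} [Fintype E] [DecidableEq E] [DecidableEq V]
    (s t : E → V) : Polynomial ℤ :=
  ∑ π ∈ Finset.univ.filter (fun π : Equiv.Perm E => ∀ e, s (π e) = t e),
    (X : Polynomial ℤ) ^ numCycles π

/-- A digraph is 2-in/2-out if every vertex has in-degree 2 and out-degree 2. -/
def TwoInTwoOut {V E : Type*} [Fintype E] [DecidableEq E] [DecidableEq V]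
    (s t : E → V) : Prop :=
  ∀ v : V, (Finset.univ.filter fun e => t e = v).card = 2 ∧
    (Finset.univ.filter fun e => s e = v).card = 2

/-- Adjacency in the underlying undirected multigraph. -/
def Adj {V E : Type*} (s t : E → V) (a b : V) : Prop :=
  ∃ e, (s e = a ∧ t e = b) ∨ (s e = b ∧ t e = a)

/-- Connectedness of the underlying undirected multigraph. -/
def ConnectedDigraph {V E : Type*} (s t : E → V) : Prop :=
  ∀ a b : V, Relation.ReflTransGen (Adj s t) a b

/-- `v` is a cut vertex: removing it disconnects the underlying undirected multigraph. -/
def IsCutVertex {V E : Type*} (s t : E → V) (v : V) : Prop :=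
  ∃ x y : V, x ≠ v ∧ y ≠ v ∧
    ¬ Relation.ReflTransGen
        (fun a b => ∃ e, s e ≠ v ∧ t e ≠ v ∧ ((s e = a ∧ t e = b) ∨ (s e = b ∧ t e = a)))
        x y

/-!
At `v` a circuit cover either continues the in-edges `e₁, e₂` by `g₁ = f e₁, g₂ = f e₂`
respectively, or crosses them; composing with the transposition of `g₁` and `g₂` exchanges
the two kinds. Covers of the first kind correspond to covers of `G\v` (merge `eᵢ` with `gᵢ`)
with the same number of circuits, and crossing such a cover splits the circuit through `g₁`
and `g₂` in two, provided `g₁` and `g₂` lie on one circuit. This is where the cut vertex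
enters. Let `A` be the component of `s e₁` in `G - v`. As many edges enter `A` as leave it;
if `t g₁ ∈ A`, this balance at `v` together with the connectivity of `G\v` would put all four
neighbours of `v` into `A`, and `v` would not cut `G`. So `e₁` is the only edge leaving `A`
and `g₂` the only edge entering it, and the circuit through `e₁, g₁` returns through `g₂`.
Summing `x ^ c + x ^ (c + 1)` over the covers of `G\v` gives `(x + 1) J(G\v)`.
-/

open Equiv Equiv.Perm Finset

namespace Equiv.Perm.SameCycle

variable {α β : Type*}

theorem swap_apply [DecidableEq α] {τ : Perm α} {a b : α} (hab : τ.SameCycle a b) (x : α) :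
    τ.SameCycle x (swap a b x) := by
  rw [swap_apply_def]
  split_ifs with ha hb
  · exact ha ▸ hab
  · exact hb ▸ hab.symm
  · rfl

variable [Finite α]

theorem map {σ : Perm α} {τ : Perm β} {φ : α → β}
    (hφ : ∀ x, τ.SameCycle (φ x) (φ (σ x))) {x y : α} (h : σ.SameCycle x y) :
    τ.SameCycle (φ x) (φ y) := by
  obtain ⟨n, rfl⟩ := h.exists_nat_pow_eq
  clear h
  induction n with
  | zero => rfl
  | succ n ih => rw [pow_succ', mul_apply]; exact ih.trans (hφ _)

variable [DecidableEq α]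

theorem of_swap_mul {τ : Perm α} {a b x y : α}
    (h : (swap a b * τ).SameCycle x y) (hab : τ.SameCycle a b) : τ.SameCycle x y :=
  h.map (φ := id) fun z => (sameCycle_apply_right.2 rfl).trans (hab.swap_apply (τ z))

theorem of_swap_mul_of_not_sameCycle {σ : Perm α} {a b x y : α}
    (h : (swap a b * σ).SameCycle x y) (ha : ¬σ.SameCycle x a) (hb : ¬σ.SameCycle x b) :
    σ.SameCycle x y := by
  have hagree : ∀ n : ℕ, ((swap a b * σ) ^ n) x = (σ ^ n) x := by
    intro n
    induction n with
    | zero => rfl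
    | succ n ih =>
      have hne : ∀ c, ¬σ.SameCycle x c → (σ ^ (n + 1)) x ≠ c := fun c hc h =>
        hc (h ▸ sameCycle_pow_right.2 rfl)
      rw [pow_succ', mul_apply, ih, mul_apply, ← mul_apply σ, ← pow_succ',
        swap_apply_of_ne_of_ne (hne a ha) (hne b hb)]
  obtain ⟨n, rfl⟩ := h.exists_nat_pow_eq
  rw [hagree]
  exact sameCycle_pow_right.2 rfl

end Equiv.Perm.SameCycle

section NumCycles

variable {α β : Type*} [Fintype α] [DecidableEq α] [Fintype β] [DecidableEq β]

def cycleOrFixedPoint (σ : Perm α) (x : α) :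
    {c // c ∈ σ.cycleFactorsFinset} ⊕ {x // σ x = x} :=
  if h : σ x = x then .inr ⟨x, h⟩
  else .inl ⟨σ.cycleOf x, cycleOf_mem_cycleFactorsFinset_iff.2 (mem_support.2 h)⟩

theorem cycleOrFixedPoint_eq_iff {σ : Perm α} {x y : α} :
    cycleOrFixedPoint σ x = cycleOrFixedPoint σ y ↔ σ.SameCycle x y := by
  unfold cycleOrFixedPoint
  by_cases hx : σ x = x <;> by_cases hy : σ y = y
  · simpa [hx, hy] using ⟨(Eq.sameCycle · σ), (SameCycle.eq_of_left · hx)⟩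
  · simpa [hx, hy] using fun h => hy (h.apply_eq_self_iff.1 hx)
  · simpa [hx, hy] using fun h => hx (h.apply_eq_self_iff.2 hy)
  · simpa [hx, hy] using (sameCycle_iff_cycleOf_eq_of_mem_support
      (mem_support.2 hx) (mem_support.2 hy)).symm

theorem cycleOrFixedPoint_surjective (σ : Perm α) :
    Function.Surjective (cycleOrFixedPoint σ) := by
  rintro (⟨c, hc⟩ | ⟨x, hx⟩)
  · obtain ⟨x, hxc⟩ := (mem_cycleFactorsFinset_iff.1 hc).1.nonempty_support
    have hx : σ x ≠ x := mem_support.1 (mem_cycleFactorsFinset_support_le hc hxc)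
    refine ⟨x, ?_⟩
    simp [cycleOrFixedPoint, hx, ← cycle_is_cycleOf hxc hc]
  · exact ⟨x, by simp [cycleOrFixedPoint, hx]⟩

theorem numCycles_eq_card_quotient (σ : Perm α) :
    numCycles σ = Nat.card (Quotient (SameCycle.setoid σ)) := by
  let code : Quotient (SameCycle.setoid σ) → _ :=
    Quotient.lift (cycleOrFixedPoint σ) fun _ _ => cycleOrFixedPoint_eq_iff.2
  have hcode : Function.Bijective code :=
    ⟨fun x y => Quotient.inductionOn₂ x y fun _ _ h =>
        Quotient.sound (cycleOrFixedPoint_eq_iff.1 h),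
      fun c => (cycleOrFixedPoint_surjective σ c).imp' (⟦·⟧) fun _ hx => hx⟩
  rw [Nat.card_congr (Equiv.ofBijective code hcode), Nat.card_sum, numCycles,
    cycleType_def, Multiset.card_map, Nat.card_eq_fintype_card, Nat.card_eq_fintype_card,
    Fintype.card_coe, Fintype.card_subtype]
  rfl

theorem sign_eq_neg_one_pow_numCycles (σ : Perm α) :
    sign σ = (-1) ^ (Fintype.card α + numCycles σ) := by
  have hfix : #{x | σ x = x} + σ.cycleType.sum = Fintype.card α := by
    have hsupp : σ.support = univ.filter fun x => ¬σ x = x := by ext; simp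
    rw [sum_cycleType, hsupp, card_filter_add_card_filter_not, card_univ]
  rw [sign_of_cycleType, numCycles, ← hfix,
    show _ + _ + (_ + _) = σ.cycleType.sum + σ.cycleType.card + 2 * _ by ring]
  simp [pow_add, pow_mul]

theorem numCycles_eq_of_sameCycle_maps {σ : Perm α} {τ : Perm β} {φ : α → β} {ψ : β → α}
    (hφ : ∀ x, τ.SameCycle (φ x) (φ (σ x))) (hψ : ∀ y, σ.SameCycle (ψ y) (ψ (τ y)))
    (hψφ : ∀ x, σ.SameCycle (ψ (φ x)) x) (hφψ : ∀ y, τ.SameCycle (φ (ψ y)) y) :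
    numCycles σ = numCycles τ := by
  rw [numCycles_eq_card_quotient, numCycles_eq_card_quotient]
  exact Nat.card_congr
    { toFun := Quotient.map φ fun _ _ => SameCycle.map hφ
      invFun := Quotient.map ψ fun _ _ => SameCycle.map hψ
      left_inv := Quotient.ind fun x => Quotient.sound (hψφ x)
      right_inv := Quotient.ind fun y => Quotient.sound (hφψ y) }

theorem numCycles_le_of_sameCycle_imp {σ τ : Perm α}
    (h : ∀ x y, σ.SameCycle x y → τ.SameCycle x y) : numCycles τ ≤ numCycles σ := by
  rw [numCycles_eq_card_quotient, numCycles_eq_card_quotient]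
  exact Nat.card_le_card_of_surjective (Quotient.map id h) (Quotient.ind fun x => ⟨⟦x⟧, rfl⟩)

theorem numCycles_swap_mul_le_succ {τ : Perm α} {a b : α} (hab : τ.SameCycle a b) :
    numCycles (swap a b * τ) ≤ numCycles τ + 1 := by
  classical
  set σ := swap a b * τ
  have hτ : τ = swap a b * σ := (swap_mul_self_mul a b τ).symm
  -- all cycles of `σ` except that of `b` are determined by the cycle of `τ` they lie in
  let code : Quotient (SameCycle.setoid σ) → Option (Quotient (SameCycle.setoid τ)) :=
    Quotient.lift (fun x => if σ.SameCycle x b then none else some (Quotient.mk _ x))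
      fun x y (hxy : σ.SameCycle x y) => by
        by_cases hx : σ.SameCycle x b
        · simp [hx, hxy.symm.trans hx]
        · rw [if_neg hx, if_neg fun h => hx (hxy.trans h)]
          exact congrArg some (Quotient.sound (s := SameCycle.setoid τ) (hxy.of_swap_mul hab))
  have hinj : Function.Injective code := by
    refine Quotient.ind₂ fun x y hxy => Quotient.sound ?_
    change (if σ.SameCycle x b then none else some _) =
      (if σ.SameCycle y b then none else some _) at hxy
    by_cases hx : σ.SameCycle x b <;> by_cases hy : σ.SameCycle y b <;>
      simp only [hx, hy, if_true, if_false, reduceCtorEq, Option.some.injEq] at hxy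
    · exact hx.trans hy.symm
    replace hxy : (swap a b * σ).SameCycle x y := hτ ▸ Quotient.exact hxy
    by_cases hxa : σ.SameCycle x a
    · by_cases hya : σ.SameCycle y a
      · exact hxa.trans hya.symm
      · exact (hxy.symm.of_swap_mul_of_not_sameCycle hya hy).symm
    · exact hxy.of_swap_mul_of_not_sameCycle hxa hx
  rw [numCycles_eq_card_quotient, numCycles_eq_card_quotient]
  simpa using Nat.card_le_card_of_injective code hinj

theorem numCycles_swap_mul_of_sameCycle {τ : Perm α} {a b : α} (hne : a ≠ b)
    (hab : τ.SameCycle a b) : numCycles (swap a b * τ) = numCycles τ + 1 := by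
  have hle : numCycles τ ≤ numCycles (swap a b * τ) :=
    numCycles_le_of_sameCycle_imp fun _ _ hxy => hxy.of_swap_mul hab
  have hparity : numCycles (swap a b * τ) ≠ numCycles τ := fun heq => by
    have hsign := sign_eq_neg_one_pow_numCycles (swap a b * τ)
    rw [heq, ← sign_eq_neg_one_pow_numCycles, Perm.sign_mul, sign_swap hne] at hsign
    simp at hsign
  have := numCycles_swap_mul_le_succ hab
  omega

end NumCycles

section Digraph

variable {V E : Type*}

theorem iff_of_reflTransGen_adj {s t : E → V} {P : V → Prop} (hP : ∀ e, P (s e) ↔ P (t e))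
    {a b : V} (hab : Relation.ReflTransGen (Adj s t) a b) : P a ↔ P b := by
  induction hab with
  | refl => rfl
  | tail _ hbc ih =>
    obtain ⟨e, ⟨rfl, rfl⟩ | ⟨rfl, rfl⟩⟩ := hbc
    exacts [ih.trans (hP e), ih.trans (hP e).symm]

theorem card_filter_enter_eq_card_filter_leave [Fintype E] [DecidableEq V] (s t : E → V)
    (A : Finset V) (hA : ∀ a ∈ A, #{e | t e = a} = #{e | s e = a}) :
    #{e | s e ∉ A ∧ t e ∈ A} = #{e | s e ∈ A ∧ t e ∉ A} := by
  have hdeg : #{e | t e ∈ A} = #{e | s e ∈ A} := by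
    rw [← sum_card_fiberwise_eq_card_filter, ← sum_card_fiberwise_eq_card_filter]
    exact sum_congr rfl hA
  have hsplit : #{e | s e ∉ A ∧ t e ∈ A} + #{e | s e ∈ A} =
      #{e | s e ∈ A ∧ t e ∉ A} + #{e | t e ∈ A} := by
    simp only [card_filter, ← sum_add_distrib]
    exact sum_congr rfl fun e _ => by by_cases s e ∈ A <;> by_cases t e ∈ A <;> simp [*]
  omega

theorem Equiv.Perm.exists_sameCycle_enter [Finite E] {s t : E → V} {π : Perm E}
    (hπ : ∀ e, s (π e) = t e) {A : Set V} {x : E} (hsx : s x ∈ A) (htx : t x ∉ A) :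
    ∃ y, π.SameCycle x y ∧ s y ∉ A ∧ t y ∈ A := by
  by_contra! hnone
  have hout : ∀ n : ℕ, t ((π ^ n) x) ∉ A := by
    intro n
    induction n with
    | zero => exact htx
    | succ n ih =>
      refine hnone _ (sameCycle_pow_right.2 SameCycle.rfl) ?_
      rwa [pow_succ', mul_apply, hπ]
  obtain ⟨n, hn⟩ := SameCycle.exists_nat_pow_eq (f := π) (x := x) (y := π⁻¹ x) ⟨-1, by simp⟩
  apply hout n
  simpa [hn, ← hπ] using hsx

structure InOutEdges (s t : E → V) (v : V) (e₁ e₂ g₁ g₂ : E) : Prop where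
  in_iff : ∀ e, t e = v ↔ e = e₁ ∨ e = e₂
  out_iff : ∀ e, s e = v ↔ e = g₁ ∨ e = g₂
  in_ne : e₁ ≠ e₂
  out_ne : g₁ ≠ g₂
  src_e₁ : s e₁ ≠ v
  src_e₂ : s e₂ ≠ v

theorem exists_inOutEdges [Fintype E] [DecidableEq V] [DecidableEq E] {s t : E → V} {v : V}
    {f : E → E} (hin : #{e | t e = v} = 2) (hout : #{e | s e = v} = 2)
    (hnoloop : ∀ e, t e = v → s e ≠ v) (hf_start : ∀ e, t e = v → s (f e) = v)
    (hf_inj : ∀ e e', t e = v → t e' = v → f e = f e' → e = e') :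
    ∃ e₁ e₂, InOutEdges s t v e₁ e₂ (f e₁) (f e₂) := by
  obtain ⟨e₁, e₂, hne, hI⟩ := card_eq_two.1 hin
  have in_iff : ∀ e, t e = v ↔ e = e₁ ∨ e = e₂ := by simpa [Finset.ext_iff] using hI
  have hte₁ := (in_iff e₁).2 (.inl rfl)
  have hte₂ := (in_iff e₂).2 (.inr rfl)
  have hfne : f e₁ ≠ f e₂ := fun h => hne (hf_inj _ _ hte₁ hte₂ h)
  have hsub : {f e₁, f e₂} ⊆ ({e | s e = v} : Finset E) := by
    simp [insert_subset_iff, hf_start, in_iff]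
  have hO := eq_of_subset_of_card_le hsub (by rw [hout, card_pair hfne])
  refine ⟨e₁, e₂, in_iff, ?_, hne, hfne, hnoloop _ hte₁, hnoloop _ hte₂⟩
  simpa [Finset.ext_iff] using hO.symm

namespace InOutEdges

variable {s t : E → V} {v : V} {e₁ e₂ g₁ g₂ : E}

theorem tgt_e₁ (h : InOutEdges s t v e₁ e₂ g₁ g₂) : t e₁ = v := (h.in_iff e₁).2 (.inl rfl)
theorem tgt_e₂ (h : InOutEdges s t v e₁ e₂ g₁ g₂) : t e₂ = v := (h.in_iff e₂).2 (.inr rfl)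
theorem src_g₁ (h : InOutEdges s t v e₁ e₂ g₁ g₂) : s g₁ = v := (h.out_iff g₁).2 (.inl rfl)
theorem src_g₂ (h : InOutEdges s t v e₁ e₂ g₁ g₂) : s g₂ = v := (h.out_iff g₂).2 (.inr rfl)

theorem ne_out_of_src_ne (h : InOutEdges s t v e₁ e₂ g₁ g₂) {x : E} (hx : s x ≠ v) :
    x ≠ g₁ ∧ x ≠ g₂ :=
  ⟨fun hx₁ => hx (hx₁ ▸ h.src_g₁), fun hx₂ => hx (hx₂ ▸ h.src_g₂)⟩

theorem cases (h : InOutEdges s t v e₁ e₂ g₁ g₂) (e : E) :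
    e = e₁ ∨ e = e₂ ∨ e = g₁ ∨ e = g₂ ∨ (s e ≠ v ∧ t e ≠ v) := by
  by_cases hs : s e = v
  · have := (h.out_iff e).1 hs; tauto
  by_cases ht : t e = v
  · have := (h.in_iff e).1 ht; tauto
  exact .inr (.inr (.inr (.inr ⟨hs, ht⟩)))

theorem cases_of_src_ne (h : InOutEdges s t v e₁ e₂ g₁ g₂) (x : {e // s e ≠ v}) :
    x = ⟨e₁, h.src_e₁⟩ ∨ x = ⟨e₂, h.src_e₂⟩ ∨ t x ≠ v := by
  by_cases ht : t x = v
  · rcases (h.in_iff x).1 ht with hx | hx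
    exacts [.inl (Subtype.ext hx), .inr (.inl (Subtype.ext hx))]
  exact .inr (.inr ht)

theorem sameCycle_of_separating [Finite E] (h : InOutEdges s t v e₁ e₂ g₁ g₂) {A : Finset V}
    (he₁ : s e₁ ∈ A) (hvA : v ∉ A) (hg₁ : t g₁ ∉ A)
    (hcl : ∀ e, s e ≠ v → t e ≠ v → (s e ∈ A ↔ t e ∈ A)) {π : Perm E}
    (hπ : ∀ e, s (π e) = t e) (hπ₁ : π e₁ = g₁) : π.SameCycle g₁ g₂ := by
  obtain ⟨y, hy, hsy, hty⟩ :=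
    exists_sameCycle_enter (A := A) hπ he₁ (by rw [mem_coe, h.tgt_e₁]; exact hvA)
  have hty' : t y ≠ v := fun hv => hvA (hv ▸ hty)
  have hsy' : s y = v := by_contra fun hv => hsy ((hcl y hv hty').2 hty)
  rcases (h.out_iff y).1 hsy' with rfl | rfl
  · exact absurd hty hg₁
  · exact (hπ₁ ▸ SameCycle.rfl.apply_right : π.SameCycle e₁ g₁).symm.trans hy

theorem mem_of_neighbors_mem (h : InOutEdges s t v e₁ e₂ g₁ g₂) (hconn : ConnectedDigraph s t)
    {A : Finset V} (hcl : ∀ e, s e ≠ v → t e ≠ v → (s e ∈ A ↔ t e ∈ A))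
    (he₁ : s e₁ ∈ A) (he₂ : s e₂ ∈ A) (hg₁ : t g₁ ∈ A) (hg₂ : t g₂ ∈ A) {c : V} (hc : c ≠ v) :
    c ∈ A := by
  refine ((iff_of_reflTransGen_adj (P := fun a => a = v ∨ a ∈ A) (fun e => ?_)
    (hconn v c)).1 (.inl rfl)).resolve_left hc
  rcases h.cases e with rfl | rfl | rfl | rfl | ⟨hs, ht⟩
  · exact iff_of_true (.inr he₁) (.inl h.tgt_e₁)
  · exact iff_of_true (.inr he₂) (.inl h.tgt_e₂)
  · exact iff_of_true (.inl h.src_g₁) (.inr hg₁)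
  · exact iff_of_true (.inl h.src_g₂) (.inr hg₂)
  · simp only [hs, ht, hcl e hs ht, false_or]

theorem mem_iff_of_reflTransGen_reduced [DecidableEq V] {f : E → E}
    (h : InOutEdges s t v e₁ e₂ (f e₁) (f e₂))
    {s' t' : {e // s e ≠ v} → V} (hs' : ∀ x, s' x = s x.1)
    (ht' : ∀ x, t' x = if t x.1 = v then t (f x.1) else t x.1) {A : Finset V}
    (hcl : ∀ e, s e ≠ v → t e ≠ v → (s e ∈ A ↔ t e ∈ A))
    (h₁ : s e₁ ∈ A ↔ t (f e₁) ∈ A) (h₂ : s e₂ ∈ A ↔ t (f e₂) ∈ A) {a b : V}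
    (hab : Relation.ReflTransGen (Adj s' t') a b) : a ∈ A ↔ b ∈ A := by
  refine iff_of_reflTransGen_adj (fun x => ?_) hab
  rcases h.cases_of_src_ne x with rfl | rfl | ht
  · rwa [hs', ht', if_pos h.tgt_e₁]
  · rwa [hs', ht', if_pos h.tgt_e₂]
  · rw [hs', ht', if_neg ht]
    exact hcl x x.2 ht

end InOutEdges

variable [DecidableEq V] [DecidableEq E] {s t : E → V} {v : V} {e₁ e₂ g₁ g₂ : E}

/-- Inserts `g₁` right after `e₁` and `g₂` right after `e₂` into the cycles of `π'`. -/
def liftPerm (s : E → V) (v : V) (e₁ e₂ g₁ g₂ : E) (π' : Perm {e // s e ≠ v}) : Perm E :=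
  ofSubtype π' * swap e₁ g₁ * swap e₂ g₂

theorem liftPerm_injective (s : E → V) (v : V) (e₁ e₂ g₁ g₂ : E) :
    Function.Injective (liftPerm s v e₁ e₂ g₁ g₂) :=
  fun _ _ h => ofSubtype_injective (mul_right_cancel (mul_right_cancel h))

def coversWithTransition [Fintype E] (s t : E → V) (a b : E) : Finset (Perm E) :=
  (univ.filter fun π : Perm E => ∀ e, s (π e) = t e).filter (· a = b)

namespace InOutEdges

section Lift

variable (π' : Perm {e // s e ≠ v})

theorem liftPerm_e₁ (h : InOutEdges s t v e₁ e₂ g₁ g₂) : liftPerm s v e₁ e₂ g₁ g₂ π' e₁ = g₁ := by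
  rw [liftPerm, mul_apply, mul_apply,
    swap_apply_of_ne_of_ne h.in_ne (h.ne_out_of_src_ne h.src_e₁).2, swap_apply_left,
    ofSubtype_apply_of_not_mem π' (not_not.2 h.src_g₁)]

theorem liftPerm_e₂ (h : InOutEdges s t v e₁ e₂ g₁ g₂) : liftPerm s v e₁ e₂ g₁ g₂ π' e₂ = g₂ := by
  rw [liftPerm, mul_apply, mul_apply, swap_apply_left,
    swap_apply_of_ne_of_ne (h.ne_out_of_src_ne h.src_e₁).2.symm h.out_ne.symm,
    ofSubtype_apply_of_not_mem π' (not_not.2 h.src_g₂)]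

theorem liftPerm_g₁ (h : InOutEdges s t v e₁ e₂ g₁ g₂) :
    liftPerm s v e₁ e₂ g₁ g₂ π' g₁ = π' ⟨e₁, h.src_e₁⟩ := by
  rw [liftPerm, mul_apply, mul_apply,
    swap_apply_of_ne_of_ne (h.ne_out_of_src_ne h.src_e₂).1.symm h.out_ne, swap_apply_right,
    ofSubtype_apply_of_mem]

theorem liftPerm_g₂ (h : InOutEdges s t v e₁ e₂ g₁ g₂) :
    liftPerm s v e₁ e₂ g₁ g₂ π' g₂ = π' ⟨e₂, h.src_e₂⟩ := by
  rw [liftPerm, mul_apply, mul_apply, swap_apply_right,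
    swap_apply_of_ne_of_ne h.in_ne.symm (h.ne_out_of_src_ne h.src_e₂).1, ofSubtype_apply_of_mem]

theorem liftPerm_of_tgt_ne (h : InOutEdges s t v e₁ e₂ g₁ g₂) {x : {e // s e ≠ v}}
    (hx : t x ≠ v) : liftPerm s v e₁ e₂ g₁ g₂ π' x = π' x := by
  have hne₁ : (x : E) ≠ e₁ := fun hx₁ => hx (hx₁ ▸ h.tgt_e₁)
  have hne₂ : (x : E) ≠ e₂ := fun hx₂ => hx (hx₂ ▸ h.tgt_e₂)
  obtain ⟨hg₁, hg₂⟩ := h.ne_out_of_src_ne x.2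
  rw [liftPerm, mul_apply, mul_apply, swap_apply_of_ne_of_ne hne₂ hg₂,
    swap_apply_of_ne_of_ne hne₁ hg₁, ofSubtype_apply_coe]

theorem numCycles_liftPerm [Fintype E] (h : InOutEdges s t v e₁ e₂ g₁ g₂) :
    numCycles (liftPerm s v e₁ e₂ g₁ g₂ π') = numCycles π' := by
  set L := liftPerm s v e₁ e₂ g₁ g₂ π'
  let e₁' : {e // s e ≠ v} := ⟨e₁, h.src_e₁⟩
  let e₂' : {e // s e ≠ v} := ⟨e₂, h.src_e₂⟩
  let φ : E → {e // s e ≠ v} := fun e =>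
    if hs : s e = v then (if e = g₁ then e₁' else e₂') else ⟨e, hs⟩
  have hφ_of_src_ne : ∀ x : {e // s e ≠ v}, φ x = x := fun x => by simp [φ, x.2]
  have hφg₁ : φ g₁ = e₁' := by simp [φ, h.src_g₁]
  have hφg₂ : φ g₂ = e₂' := by simp [φ, h.src_g₂, h.out_ne.symm]
  have hL₁ : L.SameCycle e₁ g₁ := h.liftPerm_e₁ π' ▸ SameCycle.rfl.apply_right
  have hL₂ : L.SameCycle e₂ g₂ := h.liftPerm_e₂ π' ▸ SameCycle.rfl.apply_right
  refine numCycles_eq_of_sameCycle_maps (φ := φ) (ψ := Subtype.val) (fun e => ?_) (fun x => ?_)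
    (fun e => ?_) (fun x => by rw [hφ_of_src_ne])
  · rcases h.cases e with rfl | rfl | rfl | rfl | ⟨hs, ht⟩
    · rw [h.liftPerm_e₁, hφg₁, hφ_of_src_ne e₁']
    · rw [h.liftPerm_e₂, hφg₂, hφ_of_src_ne e₂']
    · rw [h.liftPerm_g₁, hφg₁, hφ_of_src_ne]
      exact SameCycle.rfl.apply_right
    · rw [h.liftPerm_g₂, hφg₂, hφ_of_src_ne]
      exact SameCycle.rfl.apply_right
    · rw [h.liftPerm_of_tgt_ne π' (x := ⟨e, hs⟩) ht, hφ_of_src_ne ⟨e, hs⟩, hφ_of_src_ne]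
      exact SameCycle.rfl.apply_right
  · rcases h.cases_of_src_ne x with rfl | rfl | ht
    · exact h.liftPerm_g₁ π' ▸ hL₁.apply_right
    · exact h.liftPerm_g₂ π' ▸ hL₂.apply_right
    · exact h.liftPerm_of_tgt_ne π' ht ▸ SameCycle.rfl.apply_right
  · by_cases hs : s e = v
    · rcases (h.out_iff e).1 hs with rfl | rfl
      exacts [hφg₁ ▸ hL₁, hφg₂ ▸ hL₂]
    · rw [hφ_of_src_ne ⟨e, hs⟩]

theorem liftPerm_isCover_iff {f : E → E} (h : InOutEdges s t v e₁ e₂ (f e₁) (f e₂))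
    {s' t' : {e // s e ≠ v} → V} (hs' : ∀ x, s' x = s x.1)
    (ht' : ∀ x, t' x = if t x.1 = v then t (f x.1) else t x.1) :
    (∀ e, s (liftPerm s v e₁ e₂ (f e₁) (f e₂) π' e) = t e) ↔ ∀ x, s' (π' x) = t' x := by
  constructor
  · intro hL x
    rcases h.cases_of_src_ne x with rfl | rfl | ht
    · rw [hs', ht', if_pos h.tgt_e₁, ← hL, h.liftPerm_g₁]
    · rw [hs', ht', if_pos h.tgt_e₂, ← hL, h.liftPerm_g₂]
    · rw [hs', ht', if_neg ht, ← hL, h.liftPerm_of_tgt_ne π' ht]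
  · intro hπ' e
    rcases h.cases e with rfl | rfl | rfl | rfl | ⟨hs, ht⟩
    · rw [h.liftPerm_e₁, h.src_g₁, h.tgt_e₁]
    · rw [h.liftPerm_e₂, h.src_g₂, h.tgt_e₂]
    · rw [h.liftPerm_g₁, ← hs', hπ', ht', if_pos h.tgt_e₁]
    · rw [h.liftPerm_g₂, ← hs', hπ', ht', if_pos h.tgt_e₂]
    · rw [h.liftPerm_of_tgt_ne π' (x := ⟨e, hs⟩) ht, ← hs', hπ', ht', if_neg ht]

end Lift

theorem exists_liftPerm_eq (h : InOutEdges s t v e₁ e₂ g₁ g₂) {π : Perm E}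
    (hπ : ∀ e, s (π e) = t e) (hπ₁ : π e₁ = g₁) : ∃ π', liftPerm s v e₁ e₂ g₁ g₂ π' = π := by
  have hπ₂ : π e₂ = g₂ :=
    ((h.out_iff _).1 (by rw [hπ, h.tgt_e₂])).resolve_left
      fun h₂ => h.in_ne (π.injective (hπ₁.trans h₂.symm))
  obtain ⟨-, he₁g₂⟩ := h.ne_out_of_src_ne h.src_e₁
  set ρ := π * swap e₂ g₂ * swap e₁ g₁
  have hfix : ∀ x, s x = v → ρ x = x := by
    intro x hx
    rcases (h.out_iff x).1 hx with rfl | rfl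
    · rw [mul_apply, mul_apply, swap_apply_right, swap_apply_of_ne_of_ne h.in_ne he₁g₂, hπ₁]
    · rw [mul_apply, mul_apply, swap_apply_of_ne_of_ne he₁g₂.symm h.out_ne.symm,
        swap_apply_right, hπ₂]
  have hmem : ∀ x, s (ρ x) ≠ v ↔ s x ≠ v := fun x => by
    by_cases hx : s x = v
    · rw [hfix x hx]
    · exact iff_of_true (fun hρ => hx (ρ.injective (hfix _ hρ) ▸ hρ)) hx
  refine ⟨ρ.subtypePerm hmem, ?_⟩
  rw [liftPerm, ofSubtype_subtypePerm (p := fun e => s e ≠ v) hmem fun x hx hs => hx (hfix x hs)]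
  simp [ρ, mul_assoc]

theorem sum_coversWithTransition_eq_circuitPoly [Fintype E] {f : E → E}
    (h : InOutEdges s t v e₁ e₂ (f e₁) (f e₂)) {s' t' : {e // s e ≠ v} → V}
    (hs' : ∀ x, s' x = s x.1) (ht' : ∀ x, t' x = if t x.1 = v then t (f x.1) else t x.1) :
    ∑ π ∈ coversWithTransition s t e₁ (f e₁), X ^ numCycles π = circuitPoly s' t' := by
  symm
  refine sum_nbij (liftPerm s v e₁ e₂ (f e₁) (f e₂)) (fun π' hπ' => ?_)
    (liftPerm_injective ..).injOn (fun π hπ => ?_) (fun π' _ => by rw [h.numCycles_liftPerm])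
  · simp only [coversWithTransition, mem_filter, mem_univ, true_and] at hπ' ⊢
    exact ⟨(h.liftPerm_isCover_iff π' hs' ht').2 hπ', h.liftPerm_e₁ π'⟩
  · simp only [coversWithTransition, mem_coe, mem_filter, mem_univ, true_and] at hπ
    obtain ⟨π', rfl⟩ := h.exists_liftPerm_eq hπ.1 hπ.2
    exact ⟨π', by simpa using (h.liftPerm_isCover_iff π' hs' ht').1 hπ.1, rfl⟩

theorem circuitPoly_eq_mul_sum_coversWithTransition [Fintype E]
    (h : InOutEdges s t v e₁ e₂ g₁ g₂)
    (hsc : ∀ π : Perm E, (∀ e, s (π e) = t e) → π e₁ = g₁ → π.SameCycle g₁ g₂) :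
    circuitPoly s t = (X + 1) * ∑ π ∈ coversWithTransition s t e₁ g₁, X ^ numCycles π := by
  have hsrc : ∀ e, s (swap g₁ g₂ e) = s e := fun e => by
    rw [swap_apply_def]; split_ifs <;> simp_all [h.src_g₁, h.src_g₂]
  have hcrossed : ∑ π ∈ coversWithTransition s t e₁ g₁, X ^ (numCycles π + 1) =
      ∑ π ∈ (univ.filter fun π : Perm E => ∀ e, s (π e) = t e).filter (¬· e₁ = g₁),
        (X : ℤ[X]) ^ numCycles π := by
    refine sum_nbij' (swap g₁ g₂ * ·) (swap g₁ g₂ * ·) (fun π hπ => ?_) (fun π hπ => ?_)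
      (by simp) (by simp) (fun π hπ => ?_)
    · simp only [coversWithTransition, mem_filter, mem_univ, true_and, mul_apply, hsrc]
        at hπ ⊢
      exact ⟨hπ.1, by rw [hπ.2, swap_apply_left]; exact h.out_ne.symm⟩
    · simp only [coversWithTransition, mem_filter, mem_univ, true_and, mul_apply, hsrc]
        at hπ ⊢
      have hπ₁ : π e₁ = g₂ := ((h.out_iff _).1 (by rw [hπ.1, h.tgt_e₁])).resolve_left hπ.2
      exact ⟨hπ.1, by rw [hπ₁, swap_apply_right]⟩
    · simp only [coversWithTransition, mem_filter, mem_univ, true_and] at hπ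
      rw [numCycles_swap_mul_of_sameCycle h.out_ne (hsc π hπ.1 hπ.2)]
  rw [circuitPoly, ← sum_filter_add_sum_filter_not _ (· e₁ = g₁), ← coversWithTransition,
    ← hcrossed, mul_sum, ← sum_add_distrib]
  exact sum_congr rfl fun _ _ => by ring

/-- Every edge entering `A` starts at `v` and every edge leaving it ends at `v`, so the
balance between entering and leaving edges becomes a balance at `v`. -/
theorem mem_iff_of_mem_iff [Fintype E] (h : InOutEdges s t v e₁ e₂ g₁ g₂)
    (h22 : TwoInTwoOut s t) {A : Finset V} (hvA : v ∉ A)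
    (hcl : ∀ e, s e ≠ v → t e ≠ v → (s e ∈ A ↔ t e ∈ A)) (h₁ : s e₁ ∈ A ↔ t g₁ ∈ A) :
    s e₂ ∈ A ↔ t g₂ ∈ A := by
  have hbal := card_filter_enter_eq_card_filter_leave s t A
    fun a _ => (h22 a).1.trans (h22 a).2.symm
  have hin : e₁ ≠ g₁ ∧ e₁ ≠ g₂ ∧ e₂ ≠ g₁ ∧ e₂ ≠ g₂ :=
    ⟨(h.ne_out_of_src_ne h.src_e₁).1, (h.ne_out_of_src_ne h.src_e₁).2,
      (h.ne_out_of_src_ne h.src_e₂).1, (h.ne_out_of_src_ne h.src_e₂).2⟩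
  have henter : ({e | s e ∉ A ∧ t e ∈ A} : Finset E) = ({g₁, g₂} : Finset E).filter (t · ∈ A) := by
    ext e
    rcases h.cases e with rfl | rfl | rfl | rfl | ⟨hs, ht⟩
    · simp [h.tgt_e₁, hvA]
    · simp [h.tgt_e₂, hvA]
    · simp [h.src_g₁, hvA]
    · simp [h.src_g₂, hvA]
    · simp [hcl e hs ht, h.ne_out_of_src_ne hs]
  have hleave : ({e | s e ∈ A ∧ t e ∉ A} : Finset E) = ({e₁, e₂} : Finset E).filter (s · ∈ A) := by
    ext e
    rcases h.cases e with rfl | rfl | rfl | rfl | ⟨hs, ht⟩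
    · simp [h.tgt_e₁, hvA]
    · simp [h.tgt_e₂, hvA]
    · simp [h.src_g₁, hvA, hin.1.symm, hin.2.2.1.symm]
    · simp [h.src_g₂, hvA, hin.2.1.symm, hin.2.2.2.symm]
    · have hne : e ≠ e₁ ∧ e ≠ e₂ :=
        ⟨fun he => ht (he ▸ h.tgt_e₁), fun he => ht (he ▸ h.tgt_e₂)⟩
      simp [hcl e hs ht, hne]
  rw [henter, hleave, card_filter, card_filter, sum_pair h.out_ne, sum_pair h.in_ne] at hbal
  split_ifs at hbal <;> first | omega | tauto

theorem exists_separating [Fintype V] [Fintype E] {f : E → E}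
    (h : InOutEdges s t v e₁ e₂ (f e₁) (f e₂)) (h22 : TwoInTwoOut s t)
    (hconn : ConnectedDigraph s t) (hcut : IsCutVertex s t v) {s' t' : {e // s e ≠ v} → V}
    (hs' : ∀ x, s' x = s x.1) (ht' : ∀ x, t' x = if t x.1 = v then t (f x.1) else t x.1)
    (hconn' : ∀ a b : V, a ≠ v → b ≠ v → Relation.ReflTransGen (Adj s' t') a b) :
    ∃ A : Finset V, s e₁ ∈ A ∧ v ∉ A ∧ t (f e₁) ∉ A ∧
      ∀ e, s e ≠ v → t e ≠ v → (s e ∈ A ↔ t e ∈ A) := by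
  classical
  obtain ⟨x, y, hx, hy, hxy⟩ := hcut
  set R : V → V → Prop := fun a b =>
    ∃ e, s e ≠ v ∧ t e ≠ v ∧ ((s e = a ∧ t e = b) ∨ (s e = b ∧ t e = a))
  have : Std.Symm R := ⟨fun _ _ ⟨e, hs, ht, he⟩ => ⟨e, hs, ht, he.symm⟩⟩
  let A : Finset V := univ.filter (Relation.ReflTransGen R (s e₁))
  have he₁ : s e₁ ∈ A := mem_filter.2 ⟨mem_univ _, .refl⟩
  have hvA : v ∉ A := by
    simp only [A, mem_filter, mem_univ, true_and]
    intro hv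
    rcases hv.cases_tail with hv | ⟨c, -, e, hs, ht, ⟨-, hte⟩ | ⟨hse, -⟩⟩
    exacts [h.src_e₁ hv.symm, ht hte, hs hse]
  have hcl : ∀ e, s e ≠ v → t e ≠ v → (s e ∈ A ↔ t e ∈ A) := fun e hs ht => by
    simp only [A, mem_filter, mem_univ, true_and]
    exact ⟨(·.tail ⟨e, hs, ht, .inl ⟨rfl, rfl⟩⟩), (·.tail ⟨e, hs, ht, .inr ⟨rfl, rfl⟩⟩)⟩
  refine ⟨A, he₁, hvA, fun hg₁ => hxy ?_, hcl⟩
  have h₂ := h.mem_iff_of_mem_iff h22 hvA hcl (iff_of_true he₁ hg₁)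
  have he₂ : s e₂ ∈ A := (h.mem_iff_of_reflTransGen_reduced hs' ht' hcl (iff_of_true he₁ hg₁)
    h₂ (hconn' _ _ h.src_e₁ h.src_e₂)).1 he₁
  have hxA := h.mem_of_neighbors_mem hconn hcl he₁ he₂ hg₁ (h₂.1 he₂) hx
  have hyA := h.mem_of_neighbors_mem hconn hcl he₁ he₂ hg₁ (h₂.1 he₂) hy
  simp only [A, mem_filter, mem_univ, true_and] at hxA hyA
  exact (symm hxA).trans hyA

end InOutEdges

end Digraph

theorem circuitPoly_cut_vertex_general {V E : Type*} [Fintype V] [Fintype E]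
    [DecidableEq V] [DecidableEq E] (s t : E → V)
    (h22 : TwoInTwoOut s t) (hconn : ConnectedDigraph s t)
    (v : V) (hcut : IsCutVertex s t v)
    (hnoloop : ∀ e, t e = v → s e ≠ v)
    (f : E → E)
    (hf_start : ∀ e, t e = v → s (f e) = v)
    (hf_inj : ∀ e e', t e = v → t e' = v → f e = f e' → e = e')
    -- the reduced digraph `G\v`, on the edge set `E' = {e | s e ≠ v}`:
    (s' t' : {e : E // s e ≠ v} → V)
    (hs' : ∀ e, s' e = s e.1)
    (ht' : ∀ e, t' e = if t e.1 = v then t (f e.1) else t e.1)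
    -- the reconnection keeps `G\v` connected (on the vertices other than `v`):
    (hconn' : ∀ a b : V, a ≠ v → b ≠ v → Relation.ReflTransGen (Adj s' t') a b) :
    circuitPoly s t = (X + 1) * circuitPoly s' t' := by
  obtain ⟨e₁, e₂, h⟩ := exists_inOutEdges (h22 v).1 (h22 v).2 hnoloop hf_start hf_inj
  obtain ⟨A, he₁, hvA, hg₁, hcl⟩ := h.exists_separating h22 hconn hcut hs' ht' hconn'
  rw [h.circuitPoly_eq_mul_sum_coversWithTransition fun π hπ hπ₁ =>
      h.sameCycle_of_separating he₁ hvA hg₁ hcl hπ hπ₁,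
    h.sum_coversWithTransition_eq_circuitPoly hs' ht']

/-- Cut-vertex reduction for the circuit-counting polynomial: if `G` is a connected
2-in/2-out digraph and `v` a cut vertex, then `J(G;x) = (x+1)·J(G\v;x)`, where `G\v` is
obtained by deleting `v` and reconnecting its incident edges in an orientation-preserving
way (each in-edge `e` of `v` is merged with the out-edge `f e`), the reconnection being
such that the resulting digraph is connected. -/
theorem circuitPoly_cut_vertex {V E : Type*} [Fintype V] [Fintype E]
    [DecidableEq V] [DecidableEq E] (s t : E → V)
    (h22 : TwoInTwoOut s t) (hconn : ConnectedDigraph s t)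
    (v : V) (hcut : IsCutVertex s t v)
    (hnoloop : ∀ e, t e = v → s e ≠ v)
    (f : E → E)
    (hf_start : ∀ e, t e = v → s (f e) = v)
    (hf_inj : ∀ e e', t e = v → t e' = v → f e = f e' → e = e')
    (hf_surj : ∀ e', s e' = v → ∃ e, t e = v ∧ f e = e')
    -- the reduced digraph `G\v`, on the edge set `E' = {e | s e ≠ v}`:
    (s' t' : {e : E // s e ≠ v} → V)
    (hs' : ∀ e, s' e = s e.1)
    (ht' : ∀ e, t' e = if t e.1 = v then t (f e.1) else t e.1)
    -- the reconnection keeps `G\v` connected (on the vertices other than `v`):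
    (hconn' : ∀ a b : V, a ≠ v → b ≠ v → Relation.ReflTransGen (Adj s' t') a b) :
    circuitPoly s t = (X + 1) * circuitPoly s' t' :=
  circuitPoly_cut_vertex_general s t h22 hconn v hcut hnoloop f hf_start hf_inj s' t' hs' ht' hconn'
end

section
/- Degree bound for the circuit-counting polynomial: for any 2-in/2-out digraph G on n vertices with K(G) connected components, deg J(G;x) ≤ n + K(G). -/
open scoped BigOperators
open Polynomial

/-- The number of connected components of the underlying undirected multigraph. -/
noncomputable def numComponents {V E : Type*} (s t : E → V) : ℕ :=
  Nat.card (Quotient (Relation.EqvGen.setoid (Adj s t)))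

/-!
A term of `J(G;x)` comes from a permutation `π` of the edges with `s ∘ π = t`, of degree the
number of classes of `SameCycle π`. Identifying, at each vertex, the two edges entering it
costs at most one class per vertex. The resulting relation `SameCycle π ⊔ ker t` already
relates any two edges whose heads lie in one component of `G`: along an edge `g`, the edge
`π⁻¹ g` enters the tail of `g` and lies on the circuit through `g`. Hence it has at most
`K(G)` classes, and `π` has at most `|V| + K(G)` cycles.
-/

open Relation Equiv Equiv.Perm Finset

namespace Setoid

variable {α : Type*} [Finite α]

theorem card_quotient_le_card_quotient_sup_add_one (r : Setoid α) (a b : α) :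
    Nat.card (Quotient r) ≤
      Nat.card (Quotient (r ⊔ EqvGen.setoid fun x y => x = a ∧ y = b)) + 1 := by
  classical
  set r' := r ⊔ EqvGen.setoid fun x y => x = a ∧ y = b
  let glue : α → Quotient r := fun x => if Quotient.mk r x = Quotient.mk r b then
    Quotient.mk r a else Quotient.mk r x
  have hglue : r' ≤ ker glue := by
    refine sup_le (fun x y hxy => ?_) (eqvGen_le ?_)
    · simp only [ker_def, glue, Quotient.sound hxy]
    · rintro x y ⟨rfl, rfl⟩
      simp [ker_def, glue]
  let φ : Quotient r → Option (Quotient r') := fun c =>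
    if c = Quotient.mk r b then none else some (map_of_le le_sup_left c)
  have hφ : φ.Injective := by
    refine Quotient.ind₂ fun x y hxy => ?_
    by_cases hx : Quotient.mk r x = Quotient.mk r b <;>
      by_cases hy : Quotient.mk r y = Quotient.mk r b <;>
      simp only [φ, hx, hy, if_true, if_false, reduceCtorEq, Option.some_inj] at hxy
    · rw [hx, hy]
    · have := hglue (Quotient.exact hxy)
      simpa [ker_def, glue, hx, hy] using this
  simpa using Nat.card_le_card_of_injective φ hφ

theorem card_quotient_le_card_add_card_quotient_sup (r : Setoid α) (S : Finset (α × α)) :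
    Nat.card (Quotient r) ≤
      #S + Nat.card (Quotient (r ⊔ EqvGen.setoid fun x y => (x, y) ∈ S)) := by
  classical
  induction S using Finset.induction_on with
  | empty =>
    have : (EqvGen.setoid fun x y : α => (x, y) ∈ (∅ : Finset (α × α))) = ⊥ :=
      le_bot_iff.1 (eqvGen_le fun _ _ h => absurd h (notMem_empty _))
    rw [this, sup_bot_eq, card_empty, zero_add]
  | @insert p S hp ih =>
    have hgen : (EqvGen.setoid fun x y => (x, y) ∈ insert p S) =
        (EqvGen.setoid fun x y => (x, y) ∈ S) ⊔
          EqvGen.setoid fun x y => x = p.1 ∧ y = p.2 := by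
      rw [← gi.gc.l_sup]
      congr with x y
      simp [Prod.ext_iff, or_comm]
    rw [hgen, ← sup_assoc, card_insert_of_notMem hp]
    have := card_quotient_le_card_quotient_sup_add_one
      (r ⊔ EqvGen.setoid fun x y => (x, y) ∈ S) p.1 p.2
    omega

end Setoid

namespace Equiv.Perm

variable {E : Type*} [Fintype E] [DecidableEq E]

theorem numCycles_eq_card_quotient_sameCycle (π : Perm E) :
    numCycles π = Nat.card (Quotient (SameCycle.setoid π)) := by
  let cycle : E → π.cycleFactorsFinset ⊕ {e // π e = e} := fun e =>
    if h : π e = e then .inr ⟨e, h⟩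
    else .inl ⟨π.cycleOf e, cycleOf_mem_cycleFactorsFinset_iff.2 (mem_support.2 h)⟩
  have hcycle : Function.Surjective cycle := by
    rintro (⟨c, hc⟩ | ⟨e, he⟩)
    · obtain ⟨e, he⟩ := (mem_cycleFactorsFinset_iff.1 hc).1.nonempty_support
      have hπe : π e ≠ e := by
        rw [← mem_support]; exact mem_cycleFactorsFinset_support_le hc he
      exact ⟨e, by simp [cycle, hπe, cycle_is_cycleOf he hc]⟩
    · exact ⟨e, by simp [cycle, he]⟩
  have hker : Setoid.ker cycle = SameCycle.setoid π := by
    ext e f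
    rw [Setoid.ker_def]
    by_cases he : π e = e <;> by_cases hf : π f = f <;>
      simp only [cycle, he, hf, dite_true, dite_false, reduceCtorEq, false_iff, Sum.inr.injEq,
        Sum.inl.injEq, Subtype.mk.injEq]
    · exact ⟨fun h => h ▸ SameCycle.refl _ _, fun h => h.eq_of_left he⟩
    · exact fun h => hf (h.apply_eq_self_iff.1 he)
    · exact fun h => he (h.apply_eq_self_iff.2 hf)
    · exact (sameCycle_iff_cycleOf_eq_of_mem_support (mem_support.2 he) (mem_support.2 hf)).symm
  rw [← hker, Nat.card_congr (Setoid.quotientKerEquivOfSurjective cycle hcycle),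
    Nat.card_sum, numCycles, cycleType_def, Multiset.card_map]
  simp [Fintype.card_subtype]

end Equiv.Perm

theorem ker_component_le_sameCycle_sup_ker {V E : Type*} {s t : E → V} {π : Perm E}
    (hπ : ∀ e, s (π e) = t e) (ht : Function.Surjective t) :
    Setoid.ker (fun e => Quotient.mk (EqvGen.setoid (Adj s t)) (t e)) ≤
      SameCycle.setoid π ⊔ Setoid.ker t := by
  set ρ := SameCycle.setoid π ⊔ Setoid.ker t
  have of_head : ∀ {e f}, t e = t f → ρ e f := fun h => (le_sup_right : Setoid.ker t ≤ ρ) h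
  have along_edge : ∀ g e f, t e = s g → t f = t g → ρ e f := by
    intro g e f he hf
    have hcirc : ρ (π.symm g) g :=
      (le_sup_left : SameCycle.setoid π ≤ ρ) ⟨1, by simp⟩
    refine ρ.trans' (of_head ?_) (ρ.trans' hcirc (of_head hf.symm))
    rw [he, ← hπ, apply_symm_apply]
  suffices ∀ u w, EqvGen (Adj s t) u w → ∀ e f, t e = u → t f = w → ρ e f from
    fun e f h => this _ _ (Quotient.exact h) e f rfl rfl
  intro u w h
  induction h with
  | rel u w huw =>
    obtain ⟨g, ⟨rfl, rfl⟩ | ⟨rfl, rfl⟩⟩ := huw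
    · exact along_edge g
    · exact fun e f he hf => ρ.symm' (along_edge g f e hf he)
  | refl u => exact fun e f he hf => of_head (he.trans hf.symm)
  | symm u w _ ih => exact fun e f he hf => ρ.symm' (ih f e hf he)
  | trans u v w _ _ ih₁ ih₂ =>
    obtain ⟨g, rfl⟩ := ht v
    exact fun e f he hf => ρ.trans' (ih₁ e g he rfl) (ih₂ g f rfl hf)

theorem card_quotient_sameCycle_sup_ker_le_numComponents {V E : Type*} [Finite E] {s t : E → V}
    {π : Perm E} (hπ : ∀ e, s (π e) = t e) (ht : Function.Surjective t) :
    Nat.card (Quotient (SameCycle.setoid π ⊔ Setoid.ker t)) ≤ numComponents s t := by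
  set F := fun e => Quotient.mk (EqvGen.setoid (Adj s t)) (t e)
  have hF := ker_component_le_sameCycle_sup_ker hπ ht
  calc Nat.card (Quotient (SameCycle.setoid π ⊔ Setoid.ker t))
      ≤ Nat.card (Quotient (Setoid.ker F)) :=
        Nat.card_le_card_of_surjective (Setoid.map_of_le hF)
          (Quotient.ind fun e => ⟨Quotient.mk _ e, rfl⟩)
    _ ≤ numComponents s t := by
      have : Finite V := .of_surjective t ht
      exact Nat.card_le_card_of_injective _ (Setoid.kerLift_injective F)

theorem exists_finset_card_le_eqvGen_eq_ker {V E : Type*} [Fintype V] [Fintype E]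
    [DecidableEq V] [DecidableEq E] {t : E → V} (ht : ∀ v, #{e | t e = v} = 2) :
    ∃ S : Finset (E × E), #S ≤ Fintype.card V ∧
      EqvGen.setoid (fun e f => (e, f) ∈ S) = Setoid.ker t := by
  choose e₁ e₂ _ hfiber using fun v => card_eq_two.1 (ht v)
  have hmem : ∀ v e, t e = v ↔ e = e₁ v ∨ e = e₂ v := fun v e => by
    simpa using Finset.ext_iff.1 (hfiber v) e
  set S := univ.image fun v => (e₁ v, e₂ v)
  refine ⟨S, card_image_le, le_antisymm ?_ ?_⟩
  · refine Setoid.eqvGen_le fun e f hef => ?_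
    obtain ⟨v, -, hv⟩ := mem_image.1 hef
    simp only [Prod.mk.injEq] at hv
    rw [Setoid.ker_def, ← hv.1, ← hv.2, (hmem v _).2 (.inl rfl), (hmem v _).2 (.inr rfl)]
  · intro e f (hef : t e = t f)
    obtain ⟨v, hv⟩ : ∃ v, t f = v := ⟨_, rfl⟩
    have hpair : EqvGen (fun e f => (e, f) ∈ S) (e₁ v) (e₂ v) :=
      .rel _ _ (mem_image_of_mem _ (mem_univ v))
    rcases (hmem v e).1 (hef.trans hv) with rfl | rfl <;> rcases (hmem v f).1 hv with rfl | rfl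
    exacts [.refl _, hpair, hpair.symm, .refl _]

theorem numCycles_le_card_add_numComponents {V E : Type*} [Fintype V] [Fintype E]
    [DecidableEq V] [DecidableEq E] {s t : E → V} (ht : ∀ v, #{e | t e = v} = 2)
    {π : Perm E} (hπ : ∀ e, s (π e) = t e) :
    numCycles π ≤ Fintype.card V + numComponents s t := by
  obtain ⟨S, hS, hSt⟩ := exists_finset_card_le_eqvGen_eq_ker ht
  have ht_surj : Function.Surjective t := fun v => by
    obtain ⟨e, he⟩ := card_pos.1 (ht v ▸ two_pos : 0 < #{e | t e = v})
    exact ⟨e, (mem_filter.1 he).2⟩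
  calc numCycles π = Nat.card (Quotient (SameCycle.setoid π)) :=
        numCycles_eq_card_quotient_sameCycle π
    _ ≤ #S + Nat.card
          (Quotient (SameCycle.setoid π ⊔ EqvGen.setoid fun e f => (e, f) ∈ S)) :=
        Setoid.card_quotient_le_card_add_card_quotient_sup _ S
    _ ≤ Fintype.card V + numComponents s t := by
        rw [hSt]
        exact add_le_add hS (card_quotient_sameCycle_sup_ker_le_numComponents hπ ht_surj)

/-- Degree bound for the circuit-counting polynomial: for a 2-in/2-out digraph `G` on `n`
vertices with `K(G)` connected components, `deg J(G;x) ≤ n + K(G)`. -/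
theorem circuitPoly_natDegree_le {V E : Type*} [Fintype V] [Fintype E]
    [DecidableEq V] [DecidableEq E] (s t : E → V) (h22 : TwoInTwoOut s t) :
    (circuitPoly s t).natDegree ≤ Fintype.card V + numComponents s t := by
  refine natDegree_sum_le_of_forall_le _ _ fun π hπ => ?_
  rw [natDegree_X_pow]
  exact numCycles_le_card_add_numComponents (fun v => (h22 v).1) (mem_filter.1 hπ).2
end
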